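/- For every real t with 0 ≤ t ≤ 1, the exponential tree series satisfies Σ_{m=1}^∞ (m^{m−1}/m!) (t e^{−t})^m = t. Consequently, since m^{m−2}/(m−1)! = m^{m−1}/m!, for every real t with 0 < t ≤ 1 one has Σ_{m=2}^∞ (m^{m−2}/(m−1)!) (t e^{−t})^{m−1} = e^t − 1, and this quantity is at most 1 whenever t ≤ ln 2. -/

import Mathlib

/-!
Write `T(x) = ∑ₖ kᵏ⁻¹/k! xᵏ`. Expanding each `e^{-(m+1)t}` in `T(t e^{-t})` and regrouping
by total degree, the coefficient of `tⁿ⁺¹` is `1/(n+1)!` times the `(n+1)`-st finite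
difference of `k ↦ kⁿ` at `0`, which vanishes for `n ≥ 1`; hence `T(t e^{-t}) = t` as long as
the double series converges absolutely, i.e. for `t eᵗ ≤ 1/e`. On `(0, 1)` we have
`|t e^{-t}| < 1/e`, so both sides are analytic there and the identity propagates. Stirling's
bound `kᵏ⁻¹ e⁻ᵏ / k! ≤ k^{-3/2}` makes `T` converge uniformly on `|x| ≤ 1/e`, which gives
continuity up to `t = 1`. The remaining claims follow from
`(T(x) - x)/x = ∑ₘ (m+2)ᵐ/(m+1)! xᵐ⁺¹`.
-/

noncomputable section

open Real Finset Set
open scoped Nat Topology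

theorem sum_range_neg_one_pow_mul_choose_succ_mul_pow_eq_zero {R : Type*} [CommRing R]
    {n : ℕ} (hn : n ≠ 0) :
    ∑ i ∈ range (n + 1), (-1 : R) ^ (n - i) * ((n + 1).choose (i + 1) : R)
      * ((i + 1 : ℕ) : R) ^ n = 0 := by
  have h := congrFun (fwdDiff_iter_pow_eq_zero_of_lt (R := R) (Nat.lt_succ_self n)) 0
  rw [fwdDiff_iter_eq_sum_shift, sum_range_succ'] at h
  simpa [zero_pow hn, Nat.add_sub_add_right, mul_assoc] using h

theorem Summable.tsum_eq_tsum_sum_antidiagonal {E : Type*} [NormedAddCommGroup E]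
    [CompleteSpace E] {A : Type*} [AddCommMonoid A] [HasAntidiagonal A] {f : A × A → E}
    (hf : Summable f) : ∑' p, f p = ∑' n, ∑ p ∈ antidiagonal n, f p := by
  rw [← HasAntidiagonal.sigmaAntidiagonalEquivProd.tsum_eq f]
  exact (HasAntidiagonal.sigmaAntidiagonalEquivProd.summable_iff.2 hf).tsum_sigma.trans
    (tsum_congr fun n => Finset.tsum_subtype (antidiagonal n) f)

lemma mul_exp_neg_lt_exp_neg_one {y : ℝ} (hy : y ≠ 1) : y * exp (-y) < exp (-1) := by
  have hlt : y < exp (y - 1) := by simpa using add_one_lt_exp (sub_ne_zero.2 hy)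
  calc y * exp (-y) < exp (y - 1) * exp (-y) := by gcongr
    _ = exp (-1) := by rw [← exp_add]; ring_nf

def treeCoeff : ℕ → ℝ
  | 0 => 0
  | k + 1 => ((k + 1 : ℕ) : ℝ) ^ k / (k + 1)!

lemma treeCoeff_nonneg (k : ℕ) : 0 ≤ treeCoeff k := by
  cases k <;> simp only [treeCoeff] <;> positivity

lemma treeCoeff_add_two (m : ℕ) : treeCoeff (m + 2) = ((m + 2 : ℕ) : ℝ) ^ m / (m + 1)! := by
  simp only [treeCoeff, Nat.factorial_succ (m + 1), pow_succ]
  push_cast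
  field_simp
  ring

lemma treeCoeff_mul_exp_neg_one_pow_le (n : ℕ) :
    treeCoeff n * exp (-1) ^ n ≤ ((n : ℝ) ^ (3 / 2 : ℝ))⁻¹ := by
  rcases n with _ | k
  · simp [treeCoeff]
  set N : ℝ := ((k + 1 : ℕ) : ℝ) with hN
  have hN0 : 0 < N := by positivity
  have hpow : N ^ (3 / 2 : ℝ) = N * √N := by
    rw [show (3 / 2 : ℝ) = 1 + 1 / 2 by norm_num, rpow_add hN0, rpow_one, sqrt_eq_rpow]
  have hfactorial : √(2 * π * N) * N ^ (k + 1) ≤ (k + 1)! * exp 1 ^ (k + 1) := by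
    have := mul_le_mul_of_nonneg_right (Stirling.le_factorial_stirling (k + 1))
      (pow_nonneg (exp_pos 1).le (k + 1))
    rwa [mul_assoc, ← mul_pow, div_mul_cancel₀ _ (exp_pos 1).ne', ← hN] at this
  simp only [treeCoeff, ← hN]
  rw [hpow, exp_neg, inv_pow, ← div_eq_mul_inv, div_div, ← one_div,
    div_le_div_iff₀ (by positivity) (by positivity), one_mul]
  calc N ^ k * (N * √N) = √N * N ^ (k + 1) := by ring
    _ ≤ √(2 * π * N) * N ^ (k + 1) := by gcongr; nlinarith [pi_gt_three]
    _ ≤ (k + 1)! * exp 1 ^ (k + 1) := hfactorial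

lemma summable_treeCoeff_mul_exp_neg_one_pow :
    Summable fun k => treeCoeff k * exp (-1) ^ k :=
  .of_nonneg_of_le (fun k => by have := treeCoeff_nonneg k; positivity)
    treeCoeff_mul_exp_neg_one_pow_le (summable_nat_rpow_inv.2 (by norm_num))

lemma summable_treeCoeff_mul_pow {x : ℝ} (hx : |x| ≤ exp (-1)) :
    Summable fun k => treeCoeff k * x ^ k := by
  refine .of_norm_bounded summable_treeCoeff_mul_exp_neg_one_pow fun k => ?_
  rw [norm_mul, norm_pow, norm_of_nonneg (treeCoeff_nonneg k), norm_eq_abs]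
  gcongr
  exact treeCoeff_nonneg k

def treeFun (x : ℝ) : ℝ := ∑' k, treeCoeff k * x ^ k

lemma treeFun_eq_tsum_succ (x : ℝ) : treeFun x = ∑' m, treeCoeff (m + 1) * x ^ (m + 1) :=
  ((add_left_injective 1).tsum_eq (f := fun k => treeCoeff k * x ^ k) fun k hk => by
    rcases k with _ | m
    · simp [treeCoeff] at hk
    · exact ⟨m, rfl⟩).symm

lemma continuousOn_treeFun : ContinuousOn treeFun (Metric.closedBall 0 (exp (-1))) := by
  refine continuousOn_tsum (fun k => by fun_prop) summable_treeCoeff_mul_exp_neg_one_pow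
    fun k x hx => ?_
  rw [Metric.mem_closedBall, dist_zero_right, norm_eq_abs] at hx
  rw [norm_mul, norm_pow, norm_of_nonneg (treeCoeff_nonneg k), norm_eq_abs]
  gcongr
  exact treeCoeff_nonneg k

lemma analyticAt_treeFun {x : ℝ} (hx : |x| < exp (-1)) : AnalyticAt ℝ treeFun x := by
  set p := FormalMultilinearSeries.ofScalars ℝ treeCoeff
  set r : NNReal := ⟨exp (-1), (exp_pos _).le⟩
  have hradius : (r : ENNReal) ≤ p.radius :=
    p.le_radius_of_summable_norm <| summable_treeCoeff_mul_exp_neg_one_pow.congr fun k => by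
      rw [FormalMultilinearSeries.ofScalars_norm, norm_of_nonneg (treeCoeff_nonneg k)]; rfl
  have hsum : p.sum = treeFun := FormalMultilinearSeries.ofScalarsSum_eq_tsum treeCoeff
  rw [← hsum]
  refine (p.hasFPowerSeriesOnBall ?_).analyticAt_of_mem ?_
  · exact lt_of_lt_of_le (ENNReal.coe_pos.2 (exp_pos (-1))) hradius
  · refine Metric.mem_eball.2 (lt_of_lt_of_le ?_ hradius)
    rw [edist_zero_right]
    exact_mod_cast show ‖x‖₊ < r from hx

def treeExpTerm (t s : ℝ) (p : ℕ × ℕ) : ℝ :=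
  treeCoeff (p.1 + 1) * t ^ (p.1 + 1) * ((((p.1 + 1 : ℕ) : ℝ) * s) ^ p.2 / p.2 !)

lemma hasSum_treeExpTerm (t s : ℝ) (m : ℕ) :
    HasSum (fun k => treeExpTerm t s (m, k)) (treeCoeff (m + 1) * (t * exp s) ^ (m + 1)) := by
  have hexp := (NormedSpace.expSeries_div_hasSum_exp (((m + 1 : ℕ) : ℝ) * s)).mul_left
    (treeCoeff (m + 1) * t ^ (m + 1))
  rw [← exp_eq_exp_ℝ, exp_nat_mul] at hexp
  rwa [mul_pow, ← mul_assoc]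

lemma abs_treeExpTerm_neg {t : ℝ} (ht : 0 ≤ t) (p : ℕ × ℕ) :
    |treeExpTerm t (-t) p| = treeExpTerm t t p := by
  simp only [treeExpTerm, abs_mul, abs_div, abs_pow, abs_neg, Nat.abs_cast, abs_of_nonneg ht,
    abs_of_nonneg (treeCoeff_nonneg (p.1 + 1))]

lemma treeExpTerm_neg (t : ℝ) (i d : ℕ) :
    treeExpTerm t (-t) (i, d) = (-1 : ℝ) ^ d * ((i + d + 1).choose (i + 1) : ℝ)
      * ((i + 1 : ℕ) : ℝ) ^ (i + d) * (t ^ (i + d + 1) / (i + d + 1)!) := by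
  have hchoose : ((i + d + 1).choose (i + 1) : ℝ) * (i + 1)! * d ! = (i + d + 1)! := by
    have := Nat.add_choose_mul_factorial_mul_factorial d (i + 1)
    rw [show d + (i + 1) = i + d + 1 by ring, mul_right_comm] at this
    exact_mod_cast this
  have hd : (d ! : ℝ) ≠ 0 := by positivity
  have hi : ((i + 1)! : ℝ) ≠ 0 := by positivity
  have hc : ((i + d + 1).choose (i + 1) : ℝ) ≠ 0 :=
    Nat.cast_ne_zero.2 (Nat.choose_pos (by omega)).ne'
  rw [← hchoose]
  simp only [treeExpTerm, treeCoeff]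
  field_simp
  ring

lemma sum_antidiagonal_treeExpTerm_neg (t : ℝ) (n : ℕ) :
    ∑ p ∈ antidiagonal n, treeExpTerm t (-t) p = if n = 0 then t else 0 := by
  rw [Nat.sum_antidiagonal_eq_sum_range_succ_mk]
  rcases eq_or_ne n 0 with rfl | hn
  · simp [treeExpTerm, treeCoeff]
  rw [if_neg hn]
  calc ∑ i ∈ range (n + 1), treeExpTerm t (-t) (i, n - i)
      = (∑ i ∈ range (n + 1), (-1 : ℝ) ^ (n - i) * ((n + 1).choose (i + 1) : ℝ)
          * ((i + 1 : ℕ) : ℝ) ^ n) * (t ^ (n + 1) / (n + 1)!) := by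
        rw [sum_mul]
        refine sum_congr rfl fun i hi => ?_
        rw [treeExpTerm_neg, Nat.add_sub_cancel' (Nat.lt_succ_iff.1 (mem_range.1 hi))]
    _ = 0 := by rw [sum_range_neg_one_pow_mul_choose_succ_mul_pow_eq_zero hn, zero_mul]

theorem treeFun_mul_exp_neg_of_mul_exp_le {t : ℝ} (h0 : 0 ≤ t) (h : t * exp t ≤ exp (-1)) :
    treeFun (t * exp (-t)) = t := by
  have hrows := hasSum_treeExpTerm t (-t)
  have hdominant : Summable (treeExpTerm t t) := by
    refine (summable_prod_of_nonneg fun p => ?_).2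
      ⟨fun m => (hasSum_treeExpTerm t t m).summable, ?_⟩
    · have := treeCoeff_nonneg (p.1 + 1)
      unfold treeExpTerm
      positivity
    · simp_rw [(hasSum_treeExpTerm t t _).tsum_eq]
      refine (summable_nat_add_iff 1).2 (summable_treeCoeff_mul_pow ?_)
      rwa [abs_of_nonneg (by positivity)]
  have hsum : Summable (treeExpTerm t (-t)) :=
    .of_abs (hdominant.congr fun p => (abs_treeExpTerm_neg h0 p).symm)
  calc treeFun (t * exp (-t)) = ∑' m, treeCoeff (m + 1) * (t * exp (-t)) ^ (m + 1) :=
        treeFun_eq_tsum_succ _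
    _ = ∑' p, treeExpTerm t (-t) p :=
        ((hsum.tsum_prod' fun m => (hrows m).summable).trans
          (tsum_congr fun m => (hrows m).tsum_eq)).symm
    _ = ∑' n, ∑ p ∈ antidiagonal n, treeExpTerm t (-t) p := hsum.tsum_eq_tsum_sum_antidiagonal
    _ = t := by simp_rw [sum_antidiagonal_treeExpTerm_neg]; exact tsum_ite_eq 0 (fun _ => t)

theorem treeFun_mul_exp_neg {t : ℝ} (h0 : 0 ≤ t) (h1 : t ≤ 1) :
    treeFun (t * exp (-t)) = t := by
  set F : ℝ → ℝ := fun s => treeFun (s * exp (-s))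
  have hsmall : ∀ s ∈ Ioo (0 : ℝ) (1 / 9), F s = s := fun s hs => by
    refine treeFun_mul_exp_neg_of_mul_exp_le hs.1.le ?_
    have he : exp 1 ^ 2 < 9 := by nlinarith [exp_one_lt_d9, exp_pos 1]
    have : exp (s + 1) ≤ exp 1 ^ 2 := by
      rw [← exp_nat_mul]; gcongr; push_cast; linarith [hs.2]
    calc s * exp s = s * exp (s + 1) * exp (-1) := by rw [mul_assoc, ← exp_add]; ring_nf
      _ ≤ 1 * exp (-1) := by gcongr; nlinarith [hs.1, hs.2]
      _ = exp (-1) := one_mul _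
  have hopen : EqOn F id (Ioo 0 1) := by
    have hF : AnalyticOnNhd ℝ F (Ioo 0 1) := fun s hs =>
      (analyticAt_treeFun (by
        rw [abs_of_pos (by have := hs.1; positivity)]
        exact mul_exp_neg_lt_exp_neg_one hs.2.ne)).comp (by fun_prop)
    refine hF.eqOn_of_preconnected_of_eventuallyEq analyticOnNhd_id isPreconnected_Ioo
      (z₀ := 1 / 18) (by norm_num) ?_
    filter_upwards [Ioo_mem_nhds (by norm_num : (0 : ℝ) < 1 / 18)
      (by norm_num : (1 / 18 : ℝ) < 1 / 9)] with s hs using hsmall s hs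
  have hcont : ContinuousOn F (Icc 0 1) :=
    continuousOn_treeFun.comp (by fun_prop) fun s hs => by
      rw [Metric.mem_closedBall, dist_zero_right, norm_eq_abs,
        abs_of_nonneg (by have := hs.1; positivity)]
      exact mul_exp_neg_le_exp_neg_one s
  exact hopen.of_subset_closure hcont continuousOn_id Ioo_subset_Icc_self
    (by rw [closure_Ioo zero_ne_one]) ⟨h0, h1⟩

lemma mul_tsum_eq_treeFun_sub_self {x : ℝ} (hx : |x| ≤ exp (-1)) :
    x * ∑' m : ℕ, ((m + 2 : ℕ) : ℝ) ^ m / (m + 1)! * x ^ (m + 1) = treeFun x - x := by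
  have hshift :=
    ((summable_nat_add_iff 1).2 (summable_treeCoeff_mul_pow hx)).tsum_eq_zero_add
  rw [← treeFun_eq_tsum_succ] at hshift
  calc x * ∑' m : ℕ, ((m + 2 : ℕ) : ℝ) ^ m / (m + 1)! * x ^ (m + 1)
      = ∑' m : ℕ, treeCoeff (m + 2) * x ^ (m + 2) := by
        rw [← tsum_mul_left]
        exact tsum_congr fun m => by rw [treeCoeff_add_two]; ring
    _ = treeFun x - x := by rw [hshift]; simp [treeCoeff]

theorem tsum_mul_exp_neg_eq_exp_sub_one {t : ℝ} (h0 : 0 < t) (h1 : t ≤ 1) :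
    ∑' m : ℕ, ((m + 2 : ℕ) : ℝ) ^ m / (m + 1)! * (t * exp (-t)) ^ (m + 1) = exp t - 1 := by
  have hx : t * exp (-t) ≠ 0 := by positivity
  have key := mul_tsum_eq_treeFun_sub_self (x := t * exp (-t))
    (by rw [abs_of_pos (by positivity)]; exact mul_exp_neg_le_exp_neg_one t)
  rw [treeFun_mul_exp_neg h0.le h1, mul_comm] at key
  rw [eq_div_of_mul_eq hx key, sub_div, div_self hx, div_mul_cancel_left₀ h0.ne', exp_neg,
    inv_inv]

/-- The exponential tree series: for `0 ≤ t ≤ 1`,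
`Σ_{m ≥ 1} (m^{m-1}/m!) (t e^{-t})^m = t`; consequently, since
`m^{m-2}/(m-1)! = m^{m-1}/m!`, for `0 < t ≤ 1`,
`Σ_{m ≥ 2} (m^{m-2}/(m-1)!) (t e^{-t})^{m-1} = e^t - 1`, which is at most `1` when
`t ≤ log 2`. -/
theorem tree_series_identity (t : ℝ) :
    (0 ≤ t → t ≤ 1 →
      ∑' m : ℕ, (((m + 1 : ℕ) : ℝ) ^ m / ((m + 1).factorial : ℝ)) *
        (t * Real.exp (-t)) ^ (m + 1) = t) ∧
    (0 < t → t ≤ 1 →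
      ∑' m : ℕ, (((m + 2 : ℕ) : ℝ) ^ m / ((m + 1).factorial : ℝ)) *
        (t * Real.exp (-t)) ^ (m + 1) = Real.exp t - 1) ∧
    (0 < t → t ≤ Real.log 2 →
      ∑' m : ℕ, (((m + 2 : ℕ) : ℝ) ^ m / ((m + 1).factorial : ℝ)) *
        (t * Real.exp (-t)) ^ (m + 1) ≤ 1) := by
  refine ⟨fun h0 h1 => (treeFun_eq_tsum_succ _).symm.trans (treeFun_mul_exp_neg h0 h1),
    tsum_mul_exp_neg_eq_exp_sub_one, fun h0 h2 => ?_⟩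
  have h1 : t ≤ 1 := h2.trans (log_two_lt_d9.le.trans (by norm_num))
  rw [tsum_mul_exp_neg_eq_exp_sub_one h0 h1, sub_le_iff_le_add, one_add_one_eq_two,
    ← exp_log two_pos]
  exact exp_le_exp.2 h2
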